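/- (Deterministic suboptimality bound under an uncertainty quantifier) Define recursively for h = H,…,1: V̂_{H+1} ≡ 0; Q̂_h(s,a) = min{ B̂_h(s,a) − Γ_h(s,a), H−h+1 }⁺; π̂_h(·|s) a point mass on an action maximizing Q̂_h(s,·); and V̂_h(s) = max_a Q̂_h(s,a), where B̂_h : S × A → ℝ and Γ_h : S × A → [0,∞) satisfy |B̂_h(s,a) − (𝔹_h V̂_{h+1})(s,a)| ≤ Γ_h(s,a) for all h, s, a. Let π* be a robust optimal Markov policy. Then for every s ∈ S there exists a kernel sequence P† = (P_1†,…,P_H†) with P_h† ∈ 𝒫_h such that SubOpt(π̂; s) ≤ 2 ∑_{h=1}^H E^{π*,P†}[ Γ_h(s_h,a_h) | s_1 = s ]. -/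

import Mathlib

open scoped BigOperators
open MeasureTheory

noncomputable section

/-- The probability simplex `Δ^{K-1} ⊆ ℝ^K`. -/
def probSimplex (K : ℕ) : Set (Fin K → ℝ) :=
  {α | (∀ k, 0 ≤ α k) ∧ ∑ k, α k = 1}

/-- Data of a group-linear DRMDP: shared simplex features `φ`, and for every step `h`,
coordinate `i` and site `k`, a reward factor `θ h i k ∈ [0,1]` and a probability
mass function `μ h i k` on the (finite) state space `S`. -/
structure DRMDP (S A : Type) [Fintype S] (H K d : ℕ) where
  φ : S → A → Fin d → ℝ
  φ_nonneg : ∀ s a i, 0 ≤ φ s a i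
  φ_sum : ∀ s a, ∑ i, φ s a i = 1
  θ : Fin H → Fin d → Fin K → ℝ
  θ_nonneg : ∀ h i k, 0 ≤ θ h i k
  θ_le_one : ∀ h i k, θ h i k ≤ 1
  μ : Fin H → Fin d → Fin K → S → ℝ
  μ_nonneg : ∀ h i k s', 0 ≤ μ h i k s'
  μ_sum : ∀ h i k, ∑ s', μ h i k s' = 1

namespace DRMDP

variable {S A : Type} [Fintype S] [Fintype A] {H K d : ℕ}

/-- Site-`k` transition kernel `P_h^k(s'|s,a) = ∑_i φ_i(s,a) μ_{h,i}^k(s')`. -/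
def Pk (M : DRMDP S A H K d) (h : Fin H) (k : Fin K) (s : S) (a : A) (s' : S) : ℝ :=
  ∑ i, M.φ s a i * M.μ h i k s'

/-- Site-`k` expected reward `r_h^k(s,a) = ∑_i φ_i(s,a) θ_{h,i}^k`. -/
def rk (M : DRMDP S A H K d) (h : Fin H) (k : Fin K) (s : S) (a : A) : ℝ :=
  ∑ i, M.φ s a i * M.θ h i k

/-- Membership `(P,r) ∈ U_h` in the d-rectangular feature-wise cross-site
convex-hull uncertainty set. -/
def inU (M : DRMDP S A H K d) (h : Fin H) (P : S → A → S → ℝ) (r : S → A → ℝ) : Prop :=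
  ∃ α : Fin d → Fin K → ℝ,
    (∀ i, α i ∈ probSimplex K) ∧
    (∀ s a, r s a = ∑ i, M.φ s a i * ∑ k, α i k * M.θ h i k) ∧
    (∀ s a s', P s a s' = ∑ i, M.φ s a i * ∑ k, α i k * M.μ h i k s')

/-- Membership `P ∈ 𝒫_h` (the transition kernels appearing in `U_h`). -/
def inP (M : DRMDP S A H K d) (h : Fin H) (P : S → A → S → ℝ) : Prop :=
  ∃ r, M.inU h P r

/-- The robust Bellman operator
`(𝔹_h V)(s,a) = inf_{(P,r) ∈ U_h} [ r(s,a) + ∑_{s'} P(s'|s,a) V(s') ]`. -/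
def bellman (M : DRMDP S A H K d) (h : Fin H) (V : S → ℝ) (s : S) (a : A) : ℝ :=
  sInf {x | ∃ P r, M.inU h P r ∧ x = r s a + ∑ s', P s a s' * V s'}

end DRMDP

/-- A Markov (possibly randomized) policy: `π h (·|s)` is a pmf on the actions. -/
def IsPolicy {S A : Type} [Fintype A] (H : ℕ) (π : Fin H → S → A → ℝ) : Prop :=
  ∀ h s, (∀ a, 0 ≤ π h s a) ∧ ∑ a, π h s a = 1

/-- `cumW H π P r t s` is the expected cumulative reward `W_t(s)` from (0-indexed)
step `t` on, under policy `π` and model sequence `(P,r)`; `W_t ≡ 0` for `t ≥ H`. -/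
def cumW {S A : Type} [Fintype S] [Fintype A] (H : ℕ)
    (π : Fin H → S → A → ℝ) (P : Fin H → S → A → S → ℝ) (r : Fin H → S → A → ℝ) :
    ℕ → S → ℝ
  | t =>
    if ht : t < H then
      fun s => ∑ a, π ⟨t, ht⟩ s a *
        (r ⟨t, ht⟩ s a + ∑ s', P ⟨t, ht⟩ s a s' * cumW H π P r (t + 1) s')
    else fun _ => 0
  termination_by t => H - t
  decreasing_by omega

namespace DRMDP

variable {S A : Type} [Fintype S] [Fintype A] {H K d : ℕ}

/-- Robust value function `V_t^π(s)`: worst case of `W_t(s)` over model sequences in `∏ U_h`. -/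
def robustV (M : DRMDP S A H K d) (π : Fin H → S → A → ℝ) (t : ℕ) (s : S) : ℝ :=
  sInf {x | ∃ P r, (∀ h : Fin H, M.inU h (P h) (r h)) ∧ x = cumW H π P r t s}

/-- Robust Q-function `Q_h^π(s,a)`. -/
def robustQ (M : DRMDP S A H K d) (π : Fin H → S → A → ℝ) (h : Fin H) (s : S) (a : A) : ℝ :=
  sInf {x | ∃ P r, (∀ t : Fin H, M.inU t (P t) (r t)) ∧
    x = r h s a + ∑ s', P h s a s' * cumW H π P r ((h : ℕ) + 1) s'}

/-- `πs` is a robust optimal Markov policy. -/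
def IsOptimalRobust (M : DRMDP S A H K d) (πs : Fin H → S → A → ℝ) : Prop :=
  IsPolicy H πs ∧ ∀ π, IsPolicy H π → ∀ (h : Fin H) (s : S),
    M.robustV π (h : ℕ) s ≤ M.robustV πs (h : ℕ) s

end DRMDP

/-- Step-`t` state distribution of the Markov chain started at `s₁`, following
policy `π` and transition kernels `P`. -/
def visit {S A : Type} [Fintype S] [Fintype A] [DecidableEq S] (H : ℕ)
    (π : Fin H → S → A → ℝ) (P : Fin H → S → A → S → ℝ) (s₁ : S) : ℕ → S → ℝ
  | 0 => fun s => if s = s₁ then 1 else 0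
  | t + 1 => fun s' =>
      if ht : t < H then
        ∑ s, ∑ a, visit H π P s₁ t s * π ⟨t, ht⟩ s a * P ⟨t, ht⟩ s a s'
      else 0

/-- `E^{π,P}[ f(s_h, a_h) | s_1 = s₁ ]` (0-indexed step `h`). -/
def expAt {S A : Type} [Fintype S] [Fintype A] [DecidableEq S] (H : ℕ)
    (π : Fin H → S → A → ℝ) (P : Fin H → S → A → S → ℝ) (s₁ : S)
    (h : Fin H) (f : S → A → ℝ) : ℝ :=
  ∑ s, ∑ a, visit H π P s₁ (h : ℕ) s * π h s a * f s a


/-!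
Pessimism: since `Q̂_h ≤ 𝔹_h V̂_{h+1}`, the greedy policy `π̂` satisfies `V̂ ≤ W^{π̂}` under
every model sequence, so `V̂_1 ≤ V_1^{π̂}`. By d-rectangularity some model `(P†, r†)` attains
`𝔹_h V̂_{h+1}` at every `(s, a)`; then `Q̂_h ≥ r† + P† V̂_{h+1} - 2 Γ_h`, so `V̂` dominates the
value of `π*` in the model `(P†, r† - 2 Γ)`, while `V_1^{π*}` is at most its value in
`(P†, r†)`. Both values are sums of expectations along the `(π*, P†)`-chain; they differ by
`2 ∑_h E[Γ_h]`.
-/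

open Finset

section ConvexCombination

variable {ι : Type*} [Fintype ι] {w x : ι → ℝ} {c : ℝ}

theorem sum_mul_le_of_le (hw : ∀ i, 0 ≤ w i) (hw1 : ∑ i, w i = 1) (hx : ∀ i, x i ≤ c) :
    ∑ i, w i * x i ≤ c :=
  calc ∑ i, w i * x i ≤ ∑ i, w i * c :=
        sum_le_sum fun i _ => mul_le_mul_of_nonneg_left (hx i) (hw i)
    _ = c := by rw [← sum_mul, hw1, one_mul]

theorem le_sum_mul_of_le (hw : ∀ i, 0 ≤ w i) (hw1 : ∑ i, w i = 1) (hx : ∀ i, c ≤ x i) :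
    c ≤ ∑ i, w i * x i :=
  calc c = ∑ i, w i * c := by rw [← sum_mul, hw1, one_mul]
    _ ≤ ∑ i, w i * x i := sum_le_sum fun i _ => mul_le_mul_of_nonneg_left (hx i) (hw i)

end ConvexCombination

section PolicyEvaluation

variable {S A : Type} [Fintype S] [Fintype A] {H : ℕ}
  {π : Fin H → S → A → ℝ} {P : Fin H → S → A → S → ℝ} {r : Fin H → S → A → ℝ}

def evalStep (π : Fin H → S → A → ℝ) (P : Fin H → S → A → S → ℝ) (r : Fin H → S → A → ℝ)
    (h : Fin H) (V : S → ℝ) (s : S) : ℝ :=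
  ∑ a, π h s a * (r h s a + ∑ s', P h s a s' * V s')

theorem cumW_of_lt {t : ℕ} (ht : t < H) (s : S) :
    cumW H π P r t s = evalStep π P r ⟨t, ht⟩ (cumW H π P r (t + 1)) s := by
  rw [cumW]; simp [ht, evalStep]

theorem cumW_of_ge {t : ℕ} (ht : H ≤ t) (s : S) : cumW H π P r t s = 0 := by
  rw [cumW]; simp [Nat.not_lt.mpr ht]

theorem evalStep_mono (hπ : ∀ h s a, 0 ≤ π h s a) (hP : ∀ h s a s', 0 ≤ P h s a s')
    (h : Fin H) {V W : S → ℝ} (hVW : ∀ s, V s ≤ W s) (s : S) :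
    evalStep π P r h V s ≤ evalStep π P r h W s := by
  unfold evalStep
  gcongr with a _ s' _
  exacts [hπ h s a, hP h s a s', hVW s']

theorem evalStep_of_pointMass [DecidableEq A] {h : Fin H} {s : S} {a₀ : A}
    (hπ : ∀ a, π h s a = if a = a₀ then 1 else 0) (V : S → ℝ) :
    evalStep π P r h V s = r h s a₀ + ∑ s', P h s a₀ s' * V s' := by
  simp [evalStep, hπ]

theorem evalStep_le_of_policy (hπ : IsPolicy H π) (h : Fin H) (s : S) {V : S → ℝ} {c : ℝ}
    (hc : ∀ a, r h s a + ∑ s', P h s a s' * V s' ≤ c) : evalStep π P r h V s ≤ c :=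
  sum_mul_le_of_le (hπ h s).1 (hπ h s).2 hc

theorem le_of_evalStep (hπ : ∀ h s a, 0 ≤ π h s a) (hP : ∀ h s a s', 0 ≤ P h s a s')
    {U V : ℕ → S → ℝ} (hU : ∀ (h : Fin H) s, U h s ≤ evalStep π P r h (U ((h : ℕ) + 1)) s)
    (hV : ∀ (h : Fin H) s, evalStep π P r h (V ((h : ℕ) + 1)) s ≤ V h s)
    (hUV : ∀ t, H ≤ t → ∀ s, U t s ≤ V t s) (t : ℕ) (s : S) : U t s ≤ V t s := by
  induction hn : H - t generalizing t s with
  | zero => exact hUV t (by omega) s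
  | succ n ih =>
    have ht : t < H := by omega
    calc U t s ≤ evalStep π P r ⟨t, ht⟩ (U (t + 1)) s := hU ⟨t, ht⟩ s
      _ ≤ evalStep π P r ⟨t, ht⟩ (V (t + 1)) s :=
        evalStep_mono hπ hP _ (fun s' => ih (t + 1) s' (by omega)) s
      _ ≤ V t s := hV ⟨t, ht⟩ s

variable [DecidableEq S]

theorem sum_visit_mul_evalStep (s₁ : S) {t : ℕ} (ht : t < H) (V : S → ℝ) :
    ∑ s, visit H π P s₁ t s * evalStep π P r ⟨t, ht⟩ V s =
      expAt H π P s₁ ⟨t, ht⟩ (r ⟨t, ht⟩) + ∑ s', visit H π P s₁ (t + 1) s' * V s' := by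
  simp only [evalStep, expAt, visit, dif_pos ht, mul_sum, mul_add, sum_add_distrib, sum_mul]
  congr 1
  · exact sum_congr rfl fun s _ => sum_congr rfl fun a _ => by ring
  · conv_rhs => rw [sum_comm]
    refine sum_congr rfl fun s _ => ?_
    rw [sum_comm]
    exact sum_congr rfl fun s' _ => sum_congr rfl fun a _ => by ring

theorem cumW_zero_eq_sum_expAt (s₁ : S) :
    cumW H π P r 0 s₁ = ∑ h : Fin H, expAt H π P s₁ h (r h) := by
  have key : ∀ t ≤ H, cumW H π P r 0 s₁ =
      ∑ i ∈ range t, (if hi : i < H then expAt H π P s₁ ⟨i, hi⟩ (r ⟨i, hi⟩) else 0) +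
        ∑ s, visit H π P s₁ t s * cumW H π P r t s := by
    intro t
    induction t with
    | zero => simp [visit]
    | succ t ih =>
      intro ht
      have ht' : t < H := by omega
      simp_rw [ih ht'.le, sum_range_succ, dif_pos ht', cumW_of_lt ht',
        sum_visit_mul_evalStep s₁ ht']
      ring
  rw [key H le_rfl, sum_fin_eq_sum_range]
  simp [cumW_of_ge]

theorem expAt_sub (s₁ : S) (h : Fin H) (f g : S → A → ℝ) :
    expAt H π P s₁ h (fun s a => f s a - g s a) = expAt H π P s₁ h f - expAt H π P s₁ h g := by
  simp only [expAt, mul_sub, sum_sub_distrib]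

theorem expAt_const_mul (s₁ : S) (h : Fin H) (c : ℝ) (f : S → A → ℝ) :
    expAt H π P s₁ h (fun s a => c * f s a) = c * expAt H π P s₁ h f := by
  simp only [expAt, mul_sum]
  exact sum_congr rfl fun s _ => sum_congr rfl fun a _ => by ring

end PolicyEvaluation

namespace DRMDP

variable {S A : Type} [Fintype S] {H K d : ℕ} (M : DRMDP S A H K d)

def siteValue (h : Fin H) (V : S → ℝ) (i : Fin d) (k : Fin K) : ℝ :=
  M.θ h i k + ∑ s', M.μ h i k s' * V s'

variable {M} {h : Fin H} {V : S → ℝ} {P : S → A → S → ℝ} {r : S → A → ℝ}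

theorem value_eq_sum_siteValue {α : Fin d → Fin K → ℝ}
    (hr : ∀ s a, r s a = ∑ i, M.φ s a i * ∑ k, α i k * M.θ h i k)
    (hP : ∀ s a s', P s a s' = ∑ i, M.φ s a i * ∑ k, α i k * M.μ h i k s') (s : S) (a : A) :
    r s a + ∑ s', P s a s' * V s' = ∑ i, M.φ s a i * ∑ k, α i k * M.siteValue h V i k := by
  simp only [hr, hP, siteValue, mul_add, sum_add_distrib, mul_sum, sum_mul]
  congr 1
  rw [sum_comm]
  refine sum_congr rfl fun i _ => ?_
  rw [sum_comm]
  exact sum_congr rfl fun k _ => sum_congr rfl fun s' _ => by ring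

theorem siteValue_nonneg (hV : ∀ s, 0 ≤ V s) (i : Fin d) (k : Fin K) :
    0 ≤ M.siteValue h V i k :=
  add_nonneg (M.θ_nonneg h i k) (sum_nonneg fun s' _ => mul_nonneg (M.μ_nonneg h i k s') (hV s'))

theorem siteValue_le {c : ℝ} (hV : ∀ s, V s ≤ c) (i : Fin d) (k : Fin K) :
    M.siteValue h V i k ≤ 1 + c :=
  add_le_add (M.θ_le_one h i k) (sum_mul_le_of_le (M.μ_nonneg h i k) (M.μ_sum h i k) hV)

theorem inU.P_nonneg (hU : M.inU h P r) (s : S) (a : A) (s' : S) : 0 ≤ P s a s' := by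
  obtain ⟨α, hα, -, hP⟩ := hU
  rw [hP]
  exact sum_nonneg fun i _ => mul_nonneg (M.φ_nonneg s a i)
    (sum_nonneg fun k _ => mul_nonneg ((hα i).1 k) (M.μ_nonneg h i k s'))

theorem inU.value_nonneg (hU : M.inU h P r) (hV : ∀ s, 0 ≤ V s) (s : S) (a : A) :
    0 ≤ r s a + ∑ s', P s a s' * V s' := by
  obtain ⟨α, hα, hr, hP⟩ := hU
  rw [value_eq_sum_siteValue hr hP]
  exact le_sum_mul_of_le (M.φ_nonneg s a) (M.φ_sum s a) fun i =>
    le_sum_mul_of_le (hα i).1 (hα i).2 fun k => siteValue_nonneg hV i k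

theorem inU.value_le (hU : M.inU h P r) {c : ℝ} (hV : ∀ s, V s ≤ c) (s : S) (a : A) :
    r s a + ∑ s', P s a s' * V s' ≤ 1 + c := by
  obtain ⟨α, hα, hr, hP⟩ := hU
  rw [value_eq_sum_siteValue hr hP]
  exact sum_mul_le_of_le (M.φ_nonneg s a) (M.φ_sum s a) fun i =>
    sum_mul_le_of_le (hα i).1 (hα i).2 fun k => siteValue_le hV i k

/-- By d-rectangularity the infimum in the robust Bellman operator is attained simultaneously
at every `(s, a)`, by putting all the weight of each feature `i` on a site minimizing the
site value. -/
theorem exists_inU_value_le (hK : 1 ≤ K) (M : DRMDP S A H K d) (h : Fin H) (V : S → ℝ) :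
    ∃ P r, M.inU h P r ∧ ∀ P' r', M.inU h P' r' → ∀ s a,
      r s a + ∑ s', P s a s' * V s' ≤ r' s a + ∑ s', P' s a s' * V s' := by
  have : Nonempty (Fin K) := ⟨⟨0, hK⟩⟩
  choose k₀ hk₀ using fun i => Finite.exists_min (M.siteValue h V i)
  let α : Fin d → Fin K → ℝ := fun i k => if k = k₀ i then 1 else 0
  have hα : ∀ i, α i ∈ probSimplex K := fun i =>
    ⟨fun k => by simp only [α]; split_ifs <;> norm_num, by simp [α]⟩
  refine ⟨_, _, ⟨α, hα, fun _ _ => rfl, fun _ _ _ => rfl⟩, ?_⟩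
  rintro P' r' ⟨α', hα', hr', hP'⟩ s a
  rw [value_eq_sum_siteValue (fun _ _ => rfl) (fun _ _ _ => rfl), value_eq_sum_siteValue hr' hP']
  refine sum_le_sum fun i _ => mul_le_mul_of_nonneg_left ?_ (M.φ_nonneg s a i)
  simpa [α] using le_sum_mul_of_le (hα' i).1 (hα' i).2 (hk₀ i)

theorem bellman_eq_of_forall_le (hU : M.inU h P r) {s : S} {a : A}
    (hmin : ∀ P' r', M.inU h P' r' →
      r s a + ∑ s', P s a s' * V s' ≤ r' s a + ∑ s', P' s a s' * V s') :
    M.bellman h V s a = r s a + ∑ s', P s a s' * V s' :=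
  IsLeast.csInf_eq ⟨⟨P, r, hU, rfl⟩, by rintro _ ⟨P', r', hU', rfl⟩; exact hmin P' r' hU'⟩

theorem bellman_le (hK : 1 ≤ K) (hU : M.inU h P r) (s : S) (a : A) :
    M.bellman h V s a ≤ r s a + ∑ s', P s a s' * V s' := by
  obtain ⟨P₀, r₀, hU₀, hmin⟩ := exists_inU_value_le hK M h V
  rw [bellman_eq_of_forall_le hU₀ fun P' r' hU' => hmin P' r' hU' s a]
  exact hmin P r hU s a

theorem bellman_nonneg (hK : 1 ≤ K) (hV : ∀ s, 0 ≤ V s) (s : S) (a : A) :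
    0 ≤ M.bellman h V s a := by
  obtain ⟨P₀, r₀, hU₀, hmin⟩ := exists_inU_value_le hK M h V
  rw [bellman_eq_of_forall_le hU₀ fun P' r' hU' => hmin P' r' hU' s a]
  exact hU₀.value_nonneg hV s a

variable [Fintype A] {π : Fin H → S → A → ℝ}

theorem le_robustV (hK : 1 ≤ K) {t : ℕ} {s : S} {x : ℝ}
    (hx : ∀ P r, (∀ h : Fin H, M.inU h (P h) (r h)) → x ≤ cumW H π P r t s) :
    x ≤ M.robustV π t s := by
  choose P₀ r₀ hU₀ using fun h =>
    let ⟨P, r, hU, _⟩ := exists_inU_value_le hK M h 0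
    (⟨P, r, hU⟩ : ∃ P r, M.inU h P r)
  exact le_csInf ⟨_, P₀, r₀, hU₀, rfl⟩ (by rintro _ ⟨P, r, hU, rfl⟩; exact hx P r hU)

theorem cumW_nonneg_of_inU {P : Fin H → S → A → S → ℝ} {r : Fin H → S → A → ℝ}
    (hπ : ∀ h s a, 0 ≤ π h s a) (hU : ∀ h, M.inU h (P h) (r h)) (t : ℕ) (s : S) :
    0 ≤ cumW H π P r t s :=
  le_of_evalStep (U := fun _ _ => 0) hπ (fun h => (hU h).P_nonneg)
    (fun h s => sum_nonneg fun a _ =>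
      mul_nonneg (hπ h s a) ((hU h).value_nonneg (fun _ => le_rfl) s a))
    (fun h s => (cumW_of_lt h.isLt s).ge) (fun _ ht s => (cumW_of_ge ht s).ge) t s

theorem robustV_le_cumW {P : Fin H → S → A → S → ℝ} {r : Fin H → S → A → ℝ}
    (hπ : ∀ h s a, 0 ≤ π h s a) (hU : ∀ h, M.inU h (P h) (r h)) (t : ℕ) (s : S) :
    M.robustV π t s ≤ cumW H π P r t s :=
  csInf_le ⟨0, by rintro _ ⟨P', r', hU', rfl⟩; exact cumW_nonneg_of_inU hπ hU' t s⟩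
    ⟨P, r, hU, rfl⟩

end DRMDP

section PessimisticValueIteration

theorem clip_le_of_abs_sub_le {B b Γ c : ℝ} (hB : |B - b| ≤ Γ) (hb : 0 ≤ b) :
    max (min (B - Γ) c) 0 ≤ b :=
  max_le ((min_le_left _ _).trans (by linarith [le_abs_self (B - b)])) hb

theorem le_clip_of_abs_sub_le {B b Γ c x : ℝ} (hB : |B - b| ≤ Γ) (hxb : x ≤ b) (hxc : x ≤ c) :
    x - 2 * Γ ≤ max (min (B - Γ) c) 0 :=
  le_max_of_le_left <| le_min (by linarith [neg_abs_le (B - b)])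
    (by linarith [(abs_nonneg (B - b)).trans hB])

variable {S A : Type} [Fintype A] [Nonempty A] {H : ℕ}
  {P : Fin H → S → A → S → ℝ} {r : Fin H → S → A → ℝ}
  {Q : Fin H → S → A → ℝ} {V : ℕ → S → ℝ}

theorem greedyValue_mem_Icc
    (hV : ∀ (t : ℕ) (ht : t < H) (s : S), V t s = univ.sup' univ_nonempty (Q ⟨t, ht⟩ s))
    (hV₀ : ∀ t : ℕ, H ≤ t → ∀ s, V t s = 0)
    (hQ : ∀ (h : Fin H) s a, Q h s a ∈ Set.Icc 0 ((H : ℝ) - (h : ℕ))) (t : ℕ) (ht : t ≤ H) (s : S) :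
    V t s ∈ Set.Icc 0 ((H : ℝ) - t) := by
  rcases ht.lt_or_eq with ht | rfl
  · rw [hV t ht]
    exact ⟨(hQ _ s (Classical.arbitrary A)).1.trans (le_sup' _ (mem_univ _)),
      sup'_le _ _ fun a _ => (hQ _ s a).2⟩
  · simp [hV₀]

variable [Fintype S]

theorem greedyValue_le_cumW [DecidableEq A] {π : Fin H → S → A → ℝ}
    (hP : ∀ h s a s', 0 ≤ P h s a s')
    (hV : ∀ (t : ℕ) (ht : t < H) (s : S), V t s = univ.sup' univ_nonempty (Q ⟨t, ht⟩ s))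
    (hV₀ : ∀ t : ℕ, H ≤ t → ∀ s, V t s = 0)
    (hπ : ∀ h s, ∃ a₀, (∀ a, Q h s a ≤ Q h s a₀) ∧ ∀ a, π h s a = if a = a₀ then 1 else 0)
    (hQ : ∀ h s a, Q h s a ≤ r h s a + ∑ s', P h s a s' * V ((h : ℕ) + 1) s') (t : ℕ) (s : S) :
    V t s ≤ cumW H π P r t s := by
  have hπ_nonneg : ∀ h s a, 0 ≤ π h s a := fun h s a => by
    obtain ⟨a₀, -, hpm⟩ := hπ h s
    rw [hpm]
    split_ifs <;> norm_num
  refine le_of_evalStep hπ_nonneg hP (fun h s => ?_) (fun h s => (cumW_of_lt h.isLt s).ge)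
    (fun t ht s => by rw [hV₀ t ht, cumW_of_ge ht]) t s
  obtain ⟨a₀, hmax, hpm⟩ := hπ h s
  have hVa₀ : V h s = Q h s a₀ :=
    (hV h h.isLt s).trans <| le_antisymm (sup'_le _ _ fun a _ => hmax a) (le_sup' _ (mem_univ a₀))
  rw [evalStep_of_pointMass hpm, hVa₀]
  exact hQ h s a₀

theorem cumW_le_greedyValue {π : Fin H → S → A → ℝ} (hπ : IsPolicy H π)
    (hP : ∀ h s a s', 0 ≤ P h s a s')
    (hV : ∀ (t : ℕ) (ht : t < H) (s : S), V t s = univ.sup' univ_nonempty (Q ⟨t, ht⟩ s))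
    (hV₀ : ∀ t : ℕ, H ≤ t → ∀ s, V t s = 0)
    (hQ : ∀ h s a, r h s a + ∑ s', P h s a s' * V ((h : ℕ) + 1) s' ≤ Q h s a) (t : ℕ) (s : S) :
    cumW H π P r t s ≤ V t s :=
  le_of_evalStep (fun h s => (hπ h s).1) hP (fun h s => (cumW_of_lt h.isLt s).le)
    (fun h s => evalStep_le_of_policy hπ h s fun a =>
      (hQ h s a).trans ((le_sup' _ (mem_univ a)).trans_eq (hV h h.isLt s).symm))
    (fun t ht s => by rw [hV₀ t ht, cumW_of_ge ht]) t s

end PessimisticValueIteration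

theorem stmt_9_general {S A : Type} [Fintype S] [Fintype A] [DecidableEq S]
    [Nonempty A] [DecidableEq A]
    {H K d : ℕ} (hK : 1 ≤ K) (M : DRMDP S A H K d)
    (Bhat Γ : Fin H → S → A → ℝ)
    (Qhat : Fin H → S → A → ℝ)
    (hQhat : ∀ (h : Fin H) (s : S) (a : A),
      Qhat h s a = max (min (Bhat h s a - Γ h s a) ((H : ℝ) - ((h : ℕ) : ℝ))) 0)
    (Vhat : ℕ → S → ℝ)
    (hVhat : ∀ (t : ℕ) (ht : t < H) (s : S),
      Vhat t s = Finset.univ.sup' Finset.univ_nonempty (fun a => Qhat ⟨t, ht⟩ s a))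
    (hVhat0 : ∀ t : ℕ, H ≤ t → ∀ s, Vhat t s = 0)
    (hBhat : ∀ (h : Fin H) (s : S) (a : A),
      |Bhat h s a - M.bellman h (Vhat ((h : ℕ) + 1)) s a| ≤ Γ h s a)
    (πhat : Fin H → S → A → ℝ)
    (hπhat : ∀ (h : Fin H) (s : S), ∃ a₀ : A,
      (∀ a, Qhat h s a ≤ Qhat h s a₀) ∧
      ∀ a, πhat h s a = if a = a₀ then (1 : ℝ) else 0)
    (πstar : Fin H → S → A → ℝ) (hopt : M.IsOptimalRobust πstar) :
    ∀ s₁ : S, ∃ Pd : Fin H → S → A → S → ℝ,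
      (∀ h : Fin H, M.inP h (Pd h)) ∧
      M.robustV πstar 0 s₁ - M.robustV πhat 0 s₁ ≤
        2 * ∑ h : Fin H, expAt H πstar Pd s₁ h (fun s a => Γ h s a) := by
  intro s₁
  have hQ_mem : ∀ (h : Fin H) s a, Qhat h s a ∈ Set.Icc 0 ((H : ℝ) - (h : ℕ)) := fun h s a => by
    rw [hQhat]
    exact ⟨le_max_right _ _,
      max_le (min_le_right _ _) (sub_nonneg.mpr (by exact_mod_cast h.isLt.le))⟩
  have hV_mem := greedyValue_mem_Icc hVhat hVhat0 hQ_mem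
  have hQ_le : ∀ h s a, Qhat h s a ≤ M.bellman h (Vhat ((h : ℕ) + 1)) s a := fun h s a => by
    rw [hQhat]
    exact clip_le_of_abs_sub_le (hBhat h s a)
      (M.bellman_nonneg hK (fun s' => (hV_mem _ h.isLt s').1) s a)
  choose Pd rd hUd hmin using fun h : Fin H => M.exists_inU_value_le hK h (Vhat ((h : ℕ) + 1))
  have hQ_ge : ∀ h s a,
      rd h s a - 2 * Γ h s a + ∑ s', Pd h s a s' * Vhat ((h : ℕ) + 1) s' ≤ Qhat h s a := by
    intro h s a
    have hval := (hUd h).value_le (fun s' => (hV_mem _ h.isLt s').2) s a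
    rw [hQhat, sub_add_eq_add_sub]
    refine le_clip_of_abs_sub_le (hBhat h s a)
      (DRMDP.bellman_eq_of_forall_le (hUd h) fun P r hU => hmin h P r hU s a).ge ?_
    push_cast at hval
    linarith
  refine ⟨Pd, fun h => ⟨rd h, hUd h⟩, ?_⟩
  have hπhat_le : Vhat 0 s₁ ≤ M.robustV πhat 0 s₁ := M.le_robustV hK fun P r hU =>
    greedyValue_le_cumW (fun h => (hU h).P_nonneg) hVhat hVhat0 hπhat
      (fun h s a => (hQ_le h s a).trans (DRMDP.bellman_le hK (hU h) s a)) 0 s₁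
  have hπstar_le := M.robustV_le_cumW (fun h s a => (hopt.1 h s).1 a) hUd 0 s₁
  have hgap := cumW_le_greedyValue hopt.1 (fun h => (hUd h).P_nonneg) hVhat hVhat0 hQ_ge 0 s₁
  simp only [cumW_zero_eq_sum_expAt, expAt_sub, expAt_const_mul, sum_sub_distrib,
    ← mul_sum] at hπstar_le hgap
  linarith

/-- Deterministic suboptimality bound under a (pointwise) uncertainty
quantifier: with the pessimistic recursion
`Q̂_h = min{B̂_h − Γ_h, H−h+1}⁺`, `V̂_h(s) = max_a Q̂_h(s,a)`, `π̂` greedy, and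
`|B̂_h − 𝔹_h V̂_{h+1}| ≤ Γ_h`, for every initial state `s₁` there exists a kernel
sequence `P† ∈ ∏_h 𝒫_h` such that
`SubOpt(π̂; s₁) ≤ 2 ∑_h E^{π*,P†}[Γ_h(s_h,a_h) | s_1 = s₁]`. -/
theorem stmt_9 {S A : Type} [Fintype S] [Fintype A] [DecidableEq S]
    [Nonempty A] [DecidableEq A]
    {H K d : ℕ} (hK : 1 ≤ K) (M : DRMDP S A H K d)
    (Bhat Γ : Fin H → S → A → ℝ)
    (hΓ : ∀ h s a, 0 ≤ Γ h s a)
    (Qhat : Fin H → S → A → ℝ)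
    (hQhat : ∀ (h : Fin H) (s : S) (a : A),
      Qhat h s a = max (min (Bhat h s a - Γ h s a) ((H : ℝ) - ((h : ℕ) : ℝ))) 0)
    (Vhat : ℕ → S → ℝ)
    (hVhat : ∀ (t : ℕ) (ht : t < H) (s : S),
      Vhat t s = Finset.univ.sup' Finset.univ_nonempty (fun a => Qhat ⟨t, ht⟩ s a))
    (hVhat0 : ∀ t : ℕ, H ≤ t → ∀ s, Vhat t s = 0)
    (hBhat : ∀ (h : Fin H) (s : S) (a : A),
      |Bhat h s a - M.bellman h (Vhat ((h : ℕ) + 1)) s a| ≤ Γ h s a)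
    (πhat : Fin H → S → A → ℝ)
    (hπhat : ∀ (h : Fin H) (s : S), ∃ a₀ : A,
      (∀ a, Qhat h s a ≤ Qhat h s a₀) ∧
      ∀ a, πhat h s a = if a = a₀ then (1 : ℝ) else 0)
    (πstar : Fin H → S → A → ℝ) (hopt : M.IsOptimalRobust πstar) :
    ∀ s₁ : S, ∃ Pd : Fin H → S → A → S → ℝ,
      (∀ h : Fin H, M.inP h (Pd h)) ∧
      M.robustV πstar 0 s₁ - M.robustV πhat 0 s₁ ≤
        2 * ∑ h : Fin H, expAt H πstar Pd s₁ h (fun s a => Γ h s a) :=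
  stmt_9_general hK M Bhat Γ Qhat hQhat Vhat hVhat hVhat0 hBhat πhat hπhat πstar hopt
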